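/- arXiv:2208.01796 — 5 statements merged into one kernel-verified Lean document; each statement's English description precedes it below -/
import Mathlib

section
/- Let G be a graph, S ⊆ V(G), and G' the graph obtained by adding a pendant vertex x_v to each v ∈ S. If G' has a strong geodetic set of cardinality at most |S|, then S is a strong geodetic set of G. -/
open SimpleGraph

variable {V : Type*}

/-- A strong geodetic set: there is an assignment of one shortest path to each
(unordered, via the reversal condition) pair of vertices of `S` covering all vertices. -/
def IsStrongGeodeticSet (G : SimpleGraph V) (S : Set V) : Prop :=
  ∃ P : ∀ u v : V, G.Walk u v,
    (∀ u v : V, (P u v).length = G.dist u v) ∧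
    (∀ u v : V, P v u = (P u v).reverse) ∧
    (∀ w : V, w ∈ S ∨ ∃ u ∈ S, ∃ v ∈ S, u ≠ v ∧ w ∈ (P u v).support)

def IsSimplicial (G : SimpleGraph V) (v : V) : Prop := G.IsClique (G.neighborSet v)

/-- The graph obtained from G by attaching a new pendant vertex to each vertex of S. -/
def addPendants (G : SimpleGraph V) (S : Set V) : SimpleGraph (V ⊕ S) where
  Adj a b :=
    match a, b with
    | Sum.inl u, Sum.inl v => G.Adj u v
    | Sum.inl u, Sum.inr x => u = x.1
    | Sum.inr x, Sum.inl u => u = x.1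
    | Sum.inr _, Sum.inr _ => False
  symm := by
    constructor
    rintro (u | x) (v | y) h
    · exact G.adj_symm h
    · exact h
    · exact h
    · exact h.elim
  loopless := by
    constructor
    rintro (u | x) h
    · exact G.irrefl h
    · exact h

section Aux

variable {G : SimpleGraph V} {S : Set V}

lemma addPendants_adj_inr {x : S} {b : V ⊕ S}
    (h : (addPendants G S).Adj (Sum.inr x) b) : b = Sum.inl x.1 := by
  cases b with
  | inl u => exact congrArg Sum.inl (h : u = x.1)
  | inr z => exact (h : False).elim

/-- The inclusion homomorphism. -/
def homInl (G : SimpleGraph V) (S : Set V) : G →g addPendants G S :=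
  ⟨Sum.inl, fun h => h⟩

lemma addPendants_project :
    ∀ (n : ℕ) (u v : V) (p : (addPendants G S).Walk (Sum.inl u) (Sum.inl v)), p.length ≤ n →
    ∃ q : G.Walk u v, q.length ≤ p.length ∧
      ∀ w, Sum.inl w ∈ p.support → w ∈ q.support := by
  intro n
  induction n with
  | zero =>
    intro u v p hp
    cases p with
    | nil =>
      refine ⟨SimpleGraph.Walk.nil, by simp, ?_⟩
      intro w hw
      simp only [SimpleGraph.Walk.support_nil, List.mem_singleton, Sum.inl.injEq] at hw ⊢
      exact hw
    | cons h1 p1 => simp at hp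
  | succ n ih =>
    intro u v p hp
    cases p with
    | nil =>
      refine ⟨SimpleGraph.Walk.nil, by simp, ?_⟩
      intro w hw
      simp only [SimpleGraph.Walk.support_nil, List.mem_singleton, Sum.inl.injEq] at hw ⊢
      exact hw
    | cons h1 p1 =>
      rename_i b
      cases b with
      | inl c =>
        have h1' : G.Adj u c := h1
        have hlen : p1.length ≤ n := by
          simp only [SimpleGraph.Walk.length_cons] at hp; omega
        obtain ⟨q1, hq1len, hq1sup⟩ := ih c v p1 hlen
        refine ⟨SimpleGraph.Walk.cons h1' q1, ?_, ?_⟩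
        · simp only [SimpleGraph.Walk.length_cons]; omega
        · intro w hw
          rw [SimpleGraph.Walk.support_cons] at hw
          rcases List.mem_cons.mp hw with hw | hw
          · rw [SimpleGraph.Walk.support_cons]
            exact List.mem_cons.mpr (Or.inl (Sum.inl.inj hw))
          · rw [SimpleGraph.Walk.support_cons]
            exact List.mem_cons.mpr (Or.inr (hq1sup w hw))
      | inr z =>
        have hz : u = z.1 := h1
        cases p1 with
        | cons h2 p2 =>
          rename_i c
          cases c with
          | inr z2 => exact (h2 : False).elim
          | inl c =>
            have hc : c = u := (h2 : c = z.1).trans hz.symm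
            subst hc
            have hlen : p2.length ≤ n := by
              simp only [SimpleGraph.Walk.length_cons] at hp; omega
            obtain ⟨q2, hq2len, hq2sup⟩ := ih c v p2 hlen
            refine ⟨q2, ?_, ?_⟩
            · simp only [SimpleGraph.Walk.length_cons]; omega
            · intro w hw
              simp only [SimpleGraph.Walk.support_cons, List.mem_cons] at hw
              rcases hw with hw | hw | hw
              · rw [Sum.inl.inj hw]; exact q2.start_mem_support
              · exact (Sum.inl_ne_inr hw).elim
              · exact hq2sup w hw

lemma addPendants_extract (hG : G.Connected) (x y : S) (hxy : x.1 ≠ y.1)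
    (p : (addPendants G S).Walk (Sum.inr x) (Sum.inr y))
    (hp : p.length = (addPendants G S).dist (Sum.inr x) (Sum.inr y)) :
    ∃ q : G.Walk x.1 y.1, q.length = G.dist x.1 y.1 ∧
      ∀ w, Sum.inl w ∈ p.support → w ∈ q.support := by
  obtain ⟨q0, hq0⟩ := (hG.preconnected x.1 y.1).exists_walk_length_eq_dist
  have hadjx : (addPendants G S).Adj (Sum.inr x) (Sum.inl x.1) := rfl
  have hadjy : (addPendants G S).Adj (Sum.inl y.1) (Sum.inr y) := rfl
  have hub : (addPendants G S).dist (Sum.inr x) (Sum.inr y) ≤ G.dist x.1 y.1 + 2 := by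
    have hd := SimpleGraph.dist_le
      (SimpleGraph.Walk.cons hadjx ((q0.map (homInl G S)).concat hadjy))
    erw [SimpleGraph.Walk.length_cons, SimpleGraph.Walk.length_concat,
      SimpleGraph.Walk.length_map, hq0] at hd
    omega
  cases p with
  | nil => exact absurd rfl hxy
  | cons h1 p1 =>
    rename_i b
    have hb : b = Sum.inl x.1 := addPendants_adj_inr h1
    subst hb
    have hnn : ¬ p1.reverse.Nil :=
      SimpleGraph.Walk.not_nil_of_ne (fun hh => Sum.inr_ne_inl hh)
    obtain ⟨c, h2, r, hr⟩ := SimpleGraph.Walk.not_nil_iff.mp hnn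
    have hc : c = Sum.inl y.1 := addPendants_adj_inr h2
    subst hc
    have hp1 : p1 = (SimpleGraph.Walk.cons h2 r).reverse := by
      rw [← hr, p1.reverse_reverse]
    obtain ⟨q, hqlen, hqsup⟩ := addPendants_project r.reverse.length x.1 y.1 r.reverse le_rfl
    have hlen1 : p1.length = r.length + 1 := by rw [hp1]; simp
    have hlen2 : (SimpleGraph.Walk.cons h1 p1).length = r.length + 2 := by
      simp [SimpleGraph.Walk.length_cons, hlen1]
    have hdl : G.dist x.1 y.1 ≤ q.length := SimpleGraph.dist_le q
    have hql : q.length ≤ r.length := by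
      simpa using hqlen
    refine ⟨q, by omega, ?_⟩
    intro w hw
    apply hqsup
    simp only [SimpleGraph.Walk.support_reverse, List.mem_reverse]
    simp only [hp1, SimpleGraph.Walk.support_cons, SimpleGraph.Walk.support_reverse,
      List.mem_cons, List.mem_reverse, reduceCtorEq, false_or] at hw
    exact hw

lemma addPendants_inr_mem_of_strong {T : Set (V ⊕ S)}
    (P : ∀ a b : V ⊕ S, (addPendants G S).Walk a b)
    (hlen : ∀ a b, (P a b).length = (addPendants G S).dist a b)
    (hcov : ∀ w, w ∈ T ∨ ∃ a ∈ T, ∃ b ∈ T, a ≠ b ∧ w ∈ (P a b).support)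
    (x : S) : Sum.inr x ∈ T := by
  rcases hcov (Sum.inr x) with h | ⟨a, ha, b, hb, hab, hmem⟩
  · exact h
  by_cases hxa : (Sum.inr x : V ⊕ S) = a
  · exact hxa ▸ ha
  by_cases hxb : (Sum.inr x : V ⊕ S) = b
  · exact hxb ▸ hb
  exfalso
  obtain ⟨p1, p2, hsplit⟩ := SimpleGraph.Walk.mem_support_iff_exists_append.mp hmem
  have hnn2 : ¬ p2.Nil := SimpleGraph.Walk.not_nil_of_ne hxb
  obtain ⟨c, h2, s, hs⟩ := SimpleGraph.Walk.not_nil_iff.mp hnn2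
  have hc : c = Sum.inl x.1 := addPendants_adj_inr h2
  subst hc
  have hnn1 : ¬ p1.reverse.Nil :=
    SimpleGraph.Walk.not_nil_of_ne hxa
  obtain ⟨c', h3, r, hr⟩ := SimpleGraph.Walk.not_nil_iff.mp hnn1
  have hc' : c' = Sum.inl x.1 := addPendants_adj_inr h3
  subst hc'
  have hdle : (addPendants G S).dist a b ≤ r.length + s.length := by
    have := SimpleGraph.dist_le (r.reverse.append s)
    simpa using this
  have hp1len : p1.length = r.length + 1 := by
    have : p1 = (SimpleGraph.Walk.cons h3 r).reverse := by rw [← hr, p1.reverse_reverse]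
    rw [this]; simp
  have hp2len : p2.length = s.length + 1 := by rw [hs]; simp
  have htot : (P a b).length = p1.length + p2.length := by
    rw [hsplit]; simp [SimpleGraph.Walk.length_append]
  have := hlen a b
  omega

end Aux

/-- If the pendant extension has a strong geodetic set of cardinality at most |S|,
then S is a strong geodetic set of G. -/
theorem strongGeodeticSet_of_addPendants [Fintype V] (G : SimpleGraph V)
    (hG : G.Connected) (S : Set V)
    (h : ∃ T : Set (V ⊕ S), IsStrongGeodeticSet (addPendants G S) T ∧ T.ncard ≤ S.ncard) :
    IsStrongGeodeticSet G S := by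
  classical
  obtain ⟨T, ⟨P, hPlen, hPrev, hPcov⟩, hcard⟩ := h
  -- every pendant vertex lies in T, and by cardinality T is exactly the set of pendants
  have hsub : Set.range (Sum.inr : S → V ⊕ S) ⊆ T := by
    rintro _ ⟨x, rfl⟩
    exact addPendants_inr_mem_of_strong P hPlen hPcov x
  have hrange : (Set.range (Sum.inr : S → V ⊕ S)).ncard = S.ncard := by
    rw [← Nat.card_coe_set_eq, Nat.card_range_of_injective Sum.inr_injective,
      Nat.card_coe_set_eq]
  have hT : T = Set.range (Sum.inr : S → V ⊕ S) :=
    (Set.eq_of_subset_of_ncard_le hsub (by rw [hrange]; exact hcard) (Set.toFinite T)).symm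
  -- a linear order on V
  let e := Fintype.equivFin V
  -- choose the walks
  have hQ : ∀ u v : V, ∃ q : G.Walk u v, q.length = G.dist u v ∧
      ∀ (hu : u ∈ S) (hv : v ∈ S), u ≠ v → ∀ w,
        Sum.inl w ∈ (P (Sum.inr ⟨u, hu⟩) (Sum.inr ⟨v, hv⟩)).support → w ∈ q.support := by
    intro u v
    by_cases hcase : ∃ (hu : u ∈ S) (hv : v ∈ S), u ≠ v
    · obtain ⟨hu, hv, huv⟩ := hcase
      obtain ⟨q, hq1, hq2⟩ := addPendants_extract hG ⟨u, hu⟩ ⟨v, hv⟩ huv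
        (P (Sum.inr ⟨u, hu⟩) (Sum.inr ⟨v, hv⟩)) (hPlen _ _)
      exact ⟨q, hq1, fun hu' hv' _ w hw => hq2 w hw⟩
    · obtain ⟨q, hq⟩ := (hG.preconnected u v).exists_walk_length_eq_dist
      exact ⟨q, hq, fun hu hv huv w _ => (hcase ⟨hu, hv, huv⟩).elim⟩
  choose Q hQlen hQsup using hQ
  refine ⟨fun u v => if h : u = v then (SimpleGraph.Walk.nil).copy rfl h
      else if e u < e v then Q u v else (Q v u).reverse, ?_, ?_, ?_⟩
  · intro u v
    dsimp only
    by_cases huv : u = v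
    · subst huv
      rw [dif_pos rfl]
      simp [SimpleGraph.dist_self]
    · rw [dif_neg huv]
      by_cases hord : e u < e v
      · rw [if_pos hord]; exact hQlen u v
      · rw [if_neg hord, SimpleGraph.Walk.length_reverse, hQlen v u, SimpleGraph.dist_comm]
  · intro u v
    dsimp only
    by_cases huv : u = v
    · subst huv
      rw [dif_pos rfl]
      rfl
    · rw [dif_neg huv, dif_neg (fun hh => huv hh.symm)]
      rcases lt_trichotomy (e u) (e v) with hlt | heq | hgt
      · rw [if_pos hlt, if_neg (asymm hlt)]
      · exact absurd (e.injective heq) huv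
      · rw [if_neg (asymm hgt), if_pos hgt, SimpleGraph.Walk.reverse_reverse]
  · intro w
    rcases hPcov (Sum.inl w) with hw | ⟨a, ha, b, hb, hab, hw⟩
    · rw [hT] at hw
      obtain ⟨x, hx⟩ := hw
      exact (Sum.inr_ne_inl hx).elim
    · rw [hT] at ha hb
      obtain ⟨x, rfl⟩ := ha
      obtain ⟨y, rfl⟩ := hb
      have hne : x.1 ≠ y.1 := fun hh => hab (congrArg Sum.inr (Subtype.ext hh))
      right
      by_cases hord : e x.1 < e y.1
      · refine ⟨x.1, x.2, y.1, y.2, hne, ?_⟩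
        dsimp only
        rw [dif_neg hne, if_pos hord]
        exact hQsup x.1 y.1 x.2 y.2 hne w hw
      · have hne' : y.1 ≠ x.1 := fun hh => hne hh.symm
        have hord' : e y.1 < e x.1 :=
          lt_of_le_of_ne (not_lt.mp hord) (fun hh => hne' (e.injective hh))
        refine ⟨y.1, y.2, x.1, x.2, hne', ?_⟩
        dsimp only
        rw [dif_neg hne', if_pos hord']
        apply hQsup y.1 x.1 y.2 x.2 hne' w
        have hrev := hPrev (Sum.inr x) (Sum.inr y)
        have : (P (Sum.inr y) (Sum.inr x)).support =
            (P (Sum.inr x) (Sum.inr y)).support.reverse := by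
          rw [hrev, SimpleGraph.Walk.support_reverse]
        rw [this]
        exact List.mem_reverse.mpr hw
end

section
/- Let G be a connected graph of diameter 2 and S ⊆ V(G). Construct the bipartite graph H with parts A = {(i,j) : i,j ∈ S, i ≠ j (unordered pairs)} and B = V(G) \ S, where (i,j) is adjacent to y ∈ B iff (i,y,j) is a shortest i,j-path (i.e., y is adjacent to both i and j and i,j are non-adjacent). Then S is a strong geodetic set of G if and only if H has a matching saturating B. -/
open SimpleGraph

variable {V : Type*}

private lemma walk_struct {G : SimpleGraph V} {u v y : V} (p : G.Walk u v)
    (hl : p.length ≤ 2) (huv : u ≠ v) (hy : y ∈ p.support) (hyu : y ≠ u) (hyv : y ≠ v) :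
    G.Adj u y ∧ G.Adj y v ∧ p.support = [u, y, v] := by
  match p with
  | .nil => exact absurd rfl huv
  | .cons h .nil =>
      simp only [Walk.support_cons, Walk.support_nil, List.mem_cons, List.mem_singleton,
        List.not_mem_nil, or_false] at hy
      rcases hy with rfl | rfl
      · exact absurd rfl hyu
      · exact absurd rfl hyv
  | .cons h (.cons h' .nil) =>
      simp only [Walk.support_cons, Walk.support_nil, List.mem_cons, List.mem_singleton,
        List.not_mem_nil, or_false] at hy
      rcases hy with rfl | rfl | rfl
      · exact absurd rfl hyu
      · exact ⟨h, h', rfl⟩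
      · exact absurd rfl hyv
  | .cons _ (.cons _ (.cons _ _)) => simp at hl

/-- For a graph of diameter 2, S is a strong geodetic set iff the auxiliary bipartite
graph (pairs of S versus vertices outside S, joined when the vertex is the middle of a
shortest path between the pair) has a matching saturating the outside vertices. -/
theorem strongGeodeticSet_iff_matching (G : SimpleGraph V) (hG : G.Connected)
    (hD : G.diam = 2) (S : Set V) :
    IsStrongGeodeticSet G S ↔
      ∃ f : {y : V // y ∉ S} → Sym2 V, Function.Injective f ∧
        ∀ y : {y : V // y ∉ S}, ∃ i j : V, f y = s(i, j) ∧ i ∈ S ∧ j ∈ S ∧ i ≠ j ∧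
          G.Adj i y.1 ∧ G.Adj y.1 j ∧ ¬ G.Adj i j := by
  classical
  have hdle : ∀ u v : V, G.dist u v ≤ 2 := by
    intro u v
    have := G.dist_le_diam (u := u) (v := v)
      (G.ediam_ne_top_of_diam_ne_zero (by rw [hD]; norm_num))
    omega
  constructor
  · rintro ⟨P, hlen, hrev, hcov⟩
    choose u hu v hv huv hmem using
      fun y : {y : V // y ∉ S} => (hcov y.1).resolve_left y.2
    -- key: structure of the walk P (u y) (v y)
    have key : ∀ y : {y : V // y ∉ S},
        G.Adj (u y) y.1 ∧ G.Adj y.1 (v y) ∧ (P (u y) (v y)).support = [u y, y.1, v y] := by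
      intro y
      have hyu : y.1 ≠ u y := fun h => y.2 (h ▸ hu y)
      have hyv : y.1 ≠ v y := fun h => y.2 (h ▸ hv y)
      exact walk_struct _ (by rw [hlen]; exact hdle _ _) (huv y) (hmem y) hyu hyv
    refine ⟨fun y => s(u y, v y), ?_, ?_⟩
    · intro y1 y2 hf
      have h12 := (key y1).2.2
      rw [Sym2.eq_iff] at hf
      have hmem2 : y2.1 ∈ (P (u y1) (v y1)).support := by
        rcases hf with ⟨h1, h2⟩ | ⟨h1, h2⟩
        · rw [h1, h2]; exact hmem y2
        · rw [h1, h2, hrev, Walk.support_reverse, List.mem_reverse]; exact hmem y2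
      rw [h12] at hmem2
      have hyu : y2.1 ≠ u y1 := fun h => y2.2 (h ▸ hu y1)
      have hyv : y2.1 ≠ v y1 := fun h => y2.2 (h ▸ hv y1)
      simp only [List.mem_cons, List.not_mem_nil, or_false] at hmem2
      apply Subtype.ext
      rcases hmem2 with h | h | h
      · exact absurd h hyu
      · exact h.symm
      · exact absurd h hyv
    · intro y
      obtain ⟨h1, h2, h3⟩ := key y
      refine ⟨u y, v y, rfl, hu y, hv y, huv y, h1, h2, ?_⟩
      intro hadj
      have hd1 : G.dist (u y) (v y) = 1 := dist_eq_one_iff_adj.mpr hadj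
      have : (P (u y) (v y)).length = 2 := by
        have := congrArg List.length h3
        rw [Walk.length_support] at this
        simp at this
        omega
      rw [hlen, hd1] at this
      omega
  · rintro ⟨f, hinj, hspec⟩
    -- a linear order on V to symmetrize choices
    letI lo : LinearOrder V := IsWellOrder.linearOrder WellOrderingRel
    -- Q u v : a shortest walk, passing through y if f y = s(u,v)
    have hQ : ∀ u v : V, ∃ q : G.Walk u v, q.length = G.dist u v ∧
        ∀ y : {y : V // y ∉ S}, f y = s(u, v) → y.1 ∈ q.support := by
      intro u v
      by_cases h : ∃ y : {y : V // y ∉ S}, f y = s(u, v)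
      · obtain ⟨y, hy⟩ := h
        obtain ⟨i, j, hij, _, _, hne, hiy, hyj, hnadj⟩ := hspec y
        rw [hy] at hij
        have huy : G.Adj u y.1 ∧ G.Adj y.1 v ∧ ¬ G.Adj u v ∧ u ≠ v := by
          rw [Sym2.eq_iff] at hij
          rcases hij with ⟨rfl, rfl⟩ | ⟨rfl, rfl⟩
          · exact ⟨hiy, hyj, hnadj, hne⟩
          · exact ⟨hyj.symm, hiy.symm, fun h => hnadj h.symm, hne.symm⟩
        obtain ⟨ha1, ha2, hna, hne'⟩ := huy
        refine ⟨Walk.cons ha1 (Walk.cons ha2 Walk.nil), ?_, ?_⟩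
        · have hd2 : G.dist u v = 2 := by
            have hle : G.dist u v ≤ 2 := by simpa using G.dist_le (Walk.cons ha1 (Walk.cons ha2 Walk.nil))
            have h0 : G.dist u v ≠ 0 := fun h => hne' (hG.dist_eq_zero_iff.mp h)
            have h1 : G.dist u v ≠ 1 := fun h => hna (dist_eq_one_iff_adj.mp h)
            omega
          simp [hd2]
        · intro y' hy'
          have : y' = y := hinj (by rw [hy, hy'])
          subst this
          simp
      · obtain ⟨q, hq⟩ := hG.exists_walk_length_eq_dist u v
        exact ⟨q, hq, fun y hy => absurd ⟨y, hy⟩ h⟩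
    choose Q hQlen hQmem using hQ
    refine ⟨fun u v =>
      if huv : u = v then huv ▸ Walk.nil
      else if u ≤ v then Q u v else (Q v u).reverse, ?_, ?_, ?_⟩
    · intro u v
      by_cases huv : u = v
      · subst huv
        show (if huv : u = u then huv ▸ (Walk.nil : G.Walk u u)
            else if u ≤ u then Q u u else (Q u u).reverse).length = G.dist u u
        rw [dif_pos rfl]
        simp [SimpleGraph.dist_self]
      · by_cases hle : u ≤ v
        · show (if huv : u = v then huv ▸ Walk.nil
              else if u ≤ v then Q u v else (Q v u).reverse).length = G.dist u v
          rw [dif_neg huv, if_pos hle, hQlen]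
        · show (if huv : u = v then huv ▸ Walk.nil
              else if u ≤ v then Q u v else (Q v u).reverse).length = G.dist u v
          rw [dif_neg huv, if_neg hle, Walk.length_reverse, hQlen, SimpleGraph.dist_comm]
    · intro u v
      by_cases huv : u = v
      · subst huv
        show (if huv : u = u then huv ▸ (Walk.nil : G.Walk u u)
            else if u ≤ u then Q u u else (Q u u).reverse) =
          (if huv : u = u then huv ▸ (Walk.nil : G.Walk u u)
            else if u ≤ u then Q u u else (Q u u).reverse).reverse
        rw [dif_pos rfl]
        rfl
      · have hvu : v ≠ u := fun h => huv h.symm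
        rcases le_total u v with hle | hle
        · have hnle : ¬ v ≤ u := fun h => huv (le_antisymm hle h)
          show (if huv : v = u then huv ▸ (Walk.nil : G.Walk v v)
              else if v ≤ u then Q v u else (Q u v).reverse) =
            (if huv : u = v then huv ▸ (Walk.nil : G.Walk u u)
              else if u ≤ v then Q u v else (Q v u).reverse).reverse
          rw [dif_neg hvu, if_neg hnle, dif_neg huv, if_pos hle]
        · have hnle : ¬ u ≤ v := fun h => huv (le_antisymm h hle)
          show (if huv : v = u then huv ▸ (Walk.nil : G.Walk v v)
              else if v ≤ u then Q v u else (Q u v).reverse) =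
            (if huv : u = v then huv ▸ (Walk.nil : G.Walk u u)
              else if u ≤ v then Q u v else (Q v u).reverse).reverse
          rw [dif_neg hvu, if_pos hle, dif_neg huv, if_neg hnle, Walk.reverse_reverse]
    · intro w
      by_cases hw : w ∈ S
      · exact Or.inl hw
      · right
        obtain ⟨i, j, hij, hi, hj, hne, _, _, _⟩ := hspec ⟨w, hw⟩
        refine ⟨i, hi, j, hj, hne, ?_⟩
        have hmem : ∀ a b : V, f ⟨w, hw⟩ = s(a, b) → w ∈ (Q a b).support :=
          fun a b h => hQmem a b ⟨w, hw⟩ h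
        show w ∈ (if huv : i = j then huv ▸ Walk.nil
            else if i ≤ j then Q i j else (Q j i).reverse).support
        by_cases hle : i ≤ j
        · rw [dif_neg hne, if_pos hle]
          exact hmem i j hij
        · rw [dif_neg hne, if_neg hle, Walk.support_reverse, List.mem_reverse]
          exact hmem j i (by rw [hij, Sym2.eq_swap])
end

section
/- Let G be a connected split graph with partition into a clique C and independent set I, and let H be obtained from G by adding a pendant vertex x_u for each u ∈ I, a pendant vertex y_v for each v ∈ C, and a universal vertex z. Then H is a chordal graph of diameter 2. -/
open SimpleGraph

variable {V : Type*}

/-- The extension of a graph G by one pendant vertex per vertex of G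
(second summand) and one universal vertex z (third summand). -/
def splitExt (G : SimpleGraph V) : SimpleGraph (V ⊕ (V ⊕ Unit)) where
  Adj a b :=
    match a, b with
    | Sum.inl u, Sum.inl v => G.Adj u v
    | Sum.inl u, Sum.inr (Sum.inl v) => u = v
    | Sum.inr (Sum.inl v), Sum.inl u => u = v
    | Sum.inr (Sum.inl _), Sum.inr (Sum.inl _) => False
    | Sum.inr (Sum.inr _), Sum.inr (Sum.inr _) => False
    | Sum.inr (Sum.inr _), _ => True
    | _, Sum.inr (Sum.inr _) => True
  symm := by
    constructor
    rintro (u | v | z) (u' | v' | z') h <;> simp_all <;> exact G.adj_symm h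
  loopless := by
    constructor
    rintro (u | v | z) h
    · exact G.irrefl h
    · exact h
    · exact h

/-- Chordality: every cycle of length at least 4 has a chord. -/
def IsChordal (G : SimpleGraph V) : Prop :=
  ∀ (v : V) (c : G.Walk v v), c.IsCycle → 4 ≤ c.length →
    ∃ x y : V, x ∈ c.support ∧ y ∈ c.support ∧ G.Adj x y ∧ s(x, y) ∉ c.edges

def IsDominatingSet (G : SimpleGraph V) (D : Set V) : Prop :=
  ∀ v : V, v ∈ D ∨ ∃ d ∈ D, G.Adj d v

section Aux

variable {W : Type*} {H : SimpleGraph W}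

lemma walk_support_eq_map {u v : W} (p : H.Walk u v) :
    p.support = (List.range (p.length + 1)).map p.getVert := by
  induction p with
  | nil => simp [List.range_succ, SimpleGraph.Walk.getVert_zero]
  | cons h q ih =>
    conv_rhs => rw [SimpleGraph.Walk.length_cons, List.range_succ_eq_map, List.map_cons,
      List.map_map]
    rw [SimpleGraph.Walk.support_cons, ih]
    rfl

lemma getVert_mem_support' {u v : W} {p : H.Walk u v} {i : ℕ} (hi : i ≤ p.length) :
    p.getVert i ∈ p.support :=
  SimpleGraph.Walk.mem_support_iff_exists_getVert.mpr ⟨i, rfl, hi⟩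

lemma getVert_injOn_cycle {v : W} {c : H.Walk v v} (hc : c.IsCycle) :
    ∀ i j, 1 ≤ i → i ≤ c.length → 1 ≤ j → j ≤ c.length →
      c.getVert i = c.getVert j → i = j := by
  have hs := hc.support_nodup
  have hm : c.support.tail = (List.range c.length).map (fun k => c.getVert (k + 1)) := by
    rw [walk_support_eq_map, List.range_succ_eq_map]
    simp [List.map_map, Function.comp]
  rw [hm] at hs
  intro i j hi1 hin hj1 hjn hij
  have key := List.inj_on_of_nodup_map hs (x := i - 1) (y := j - 1)
    (List.mem_range.mpr (by omega)) (List.mem_range.mpr (by omega)) ?_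
  · omega
  · have h1 : i - 1 + 1 = i := by omega
    have h2 : j - 1 + 1 = j := by omega
    simp only [h1, h2]
    exact hij

lemma cycle_not_chord {v : W} {c : H.Walk v v} (hc : c.IsCycle) (hl : 4 ≤ c.length)
    {i : ℕ} (hi : i + 2 ≤ c.length) :
    c.getVert i ≠ c.getVert (i + 2) ∧ s(c.getVert i, c.getVert (i + 2)) ∉ c.edges := by
  have inj := getVert_injOn_cycle hc
  have h0 : c.getVert 0 = c.getVert c.length := by
    rw [SimpleGraph.Walk.getVert_zero, SimpleGraph.Walk.getVert_length]
  constructor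
  · intro h
    rcases Nat.eq_zero_or_pos i with rfl | hip
    · rw [h0] at h
      have := inj c.length (0 + 2) (by omega) le_rfl (by omega) (by omega) h
      omega
    · have := inj i (i + 2) (by omega) (by omega) (by omega) hi h
      omega
  · intro hmem
    have hadj : c.toSubgraph.Adj (c.getVert i) (c.getVert (i + 2)) :=
      (SimpleGraph.Subgraph.mem_edgeSet).mp ((c.mem_edges_toSubgraph).mpr hmem)
    obtain ⟨j, hj, hjn⟩ := (c.toSubgraph_adj_iff).mp hadj
    rw [Sym2.eq_iff] at hj
    rcases hj with ⟨h1, h2⟩ | ⟨h1, h2⟩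
    · have hji : j + 1 = i + 2 := inj _ _ (by omega) (by omega) (by omega) hi h2
      rcases Nat.eq_zero_or_pos i with rfl | hip
      · rw [h0] at h1
        have := inj j c.length (by omega) (by omega) (by omega) le_rfl h1
        omega
      · have := inj j i (by omega) (by omega) (by omega) (by omega) h1
        omega
    · rcases Nat.eq_zero_or_pos j with rfl | hjp
      · rw [h0] at h1
        have hn : c.length = i + 2 := inj _ _ (by omega) le_rfl (by omega) hi h1
        have := inj (0 + 1) i (by omega) (by omega) (by omega) (by omega) h2
        omega
      · have hji : j = i + 2 := inj _ _ (by omega) (by omega) (by omega) hi h1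
        rcases Nat.eq_zero_or_pos i with rfl | hip
        · rw [h0] at h2
          have := inj (j + 1) c.length (by omega) (by omega) (by omega) le_rfl h2
          omega
        · have := inj (j + 1) i (by omega) (by omega) (by omega) (by omega) h2
          omega

lemma exists_chord_of_adj {v : W} {c : H.Walk v v} (hc : c.IsCycle) (hl : 4 ≤ c.length)
    {i : ℕ} (hi : i + 2 ≤ c.length) (hadj : H.Adj (c.getVert i) (c.getVert (i + 2))) :
    ∃ x y : W, x ∈ c.support ∧ y ∈ c.support ∧ H.Adj x y ∧ s(x, y) ∉ c.edges := by
  obtain ⟨_, hnm⟩ := cycle_not_chord hc hl hi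
  exact ⟨_, _, getVert_mem_support' (by omega), getVert_mem_support' hi, hadj, hnm⟩

lemma mem_support_of_rotate [DecidableEq W] {u v x : W} {c : H.Walk v v} (h : u ∈ c.support)
    (hx : x ∈ (c.rotate _ h).support) : x ∈ c.support := by
  rw [SimpleGraph.Walk.support_eq_cons] at hx
  rcases List.mem_cons.mp hx with rfl | hx
  · exact h
  · have := (SimpleGraph.Walk.support_rotate c _ h).mem_iff.mp hx
    rw [SimpleGraph.Walk.support_eq_cons c]
    exact List.mem_cons_of_mem _ this

lemma length_rotate' [DecidableEq W] {u v : W} {c : H.Walk v v} (h : u ∈ c.support) :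
    (c.rotate _ h).length = c.length := by
  rw [← SimpleGraph.Walk.length_edges, ← SimpleGraph.Walk.length_edges,
    (c.rotate_edges _ h).perm.length_eq]

end Aux

section SplitExtAux

lemma splitExt_adj_z (G : SimpleGraph V) (a : V ⊕ (V ⊕ Unit))
    (h : a ≠ Sum.inr (Sum.inr ())) : (splitExt G).Adj (Sum.inr (Sum.inr ())) a := by
  rcases a with u | u | t
  · exact trivial
  · exact trivial
  · cases t; exact absurd rfl h

lemma splitExt_pendant_adj {G : SimpleGraph V} {w : V} {x : V ⊕ (V ⊕ Unit)}
    (h : (splitExt G).Adj (Sum.inr (Sum.inl w)) x) :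
    x = Sum.inl w ∨ x = Sum.inr (Sum.inr ()) := by
  rcases x with u | u | t
  · left
    have hx : u = w := h
    rw [hx]
  · exact absurd h (fun h => h)
  · cases t; right; rfl

end SplitExtAux

/-- The extension H of a connected split graph is chordal and has diameter 2. -/
theorem splitExt_chordal_diam_two [Nontrivial V] (G : SimpleGraph V) (hG : G.Connected)
    (C : Set V) (hC : G.IsClique C) (hI : ∀ u ∈ Cᶜ, ∀ v ∈ Cᶜ, ¬ G.Adj u v) :
    IsChordal (splitExt G) ∧ (∀ a b, (splitExt G).dist a b ≤ 2) ∧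
      (∃ a b, (splitExt G).dist a b = 2) := by
  classical
  refine ⟨?_, ?_, ?_⟩
  · -- chordality
    intro v c hc hl
    rcases Classical.em ((Sum.inr (Sum.inr ()) : V ⊕ (V ⊕ Unit)) ∈ c.support) with hz | hz
    · -- the universal vertex z lies on the cycle
      have hcyc' := hc.rotate hz
      have hlen' : (c.rotate _ hz).length = c.length := length_rotate' hz
      have hl' : 4 ≤ (c.rotate _ hz).length := by omega
      have hne : (c.rotate _ hz).getVert 2 ≠ Sum.inr (Sum.inr ()) := by
        intro h
        have hgl : (c.rotate _ hz).getVert (c.rotate _ hz).length = Sum.inr (Sum.inr ()) :=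
          SimpleGraph.Walk.getVert_length _
        have := getVert_injOn_cycle hcyc' 2 (c.rotate _ hz).length (by omega) (by omega)
          (by omega) le_rfl (by rw [h, hgl])
        omega
      have hadj : (splitExt G).Adj ((c.rotate _ hz).getVert 0) ((c.rotate _ hz).getVert (0 + 2)) := by
        rw [SimpleGraph.Walk.getVert_zero]
        exact splitExt_adj_z G _ hne
      obtain ⟨x, y, hx, hy, hxy, hmem⟩ := exists_chord_of_adj hcyc' hl' (by omega) hadj
      exact ⟨x, y, mem_support_of_rotate hz hx, mem_support_of_rotate hz hy, hxy,
        fun hm => hmem (((c.rotate_edges _ hz).mem_iff).mpr hm)⟩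
    · rcases Classical.em (∃ w, (Sum.inr (Sum.inl w) : V ⊕ (V ⊕ Unit)) ∈ c.support) with hp | hp
      · -- a pendant vertex on the cycle: impossible
        exfalso
        obtain ⟨w, hw⟩ := hp
        have hcyc' := hc.rotate hw
        have hlen' : (c.rotate _ hw).length = c.length := length_rotate' hw
        have ha := (c.rotate _ hw).adj_getVert_succ (i := 0) (by omega)
        have hb := (c.rotate _ hw).adj_getVert_succ (i := (c.rotate _ hw).length - 1) (by omega)
        rw [Nat.sub_add_cancel (by omega)] at hb
        rw [SimpleGraph.Walk.getVert_zero] at ha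
        rw [SimpleGraph.Walk.getVert_length] at hb
        have h1 := splitExt_pendant_adj ha
        have h2 := splitExt_pendant_adj hb.symm
        have hz1 : (c.rotate _ hw).getVert (0 + 1) ≠ Sum.inr (Sum.inr ()) := by
          intro h
          exact hz (mem_support_of_rotate hw (h ▸ getVert_mem_support' (by omega)))
        have hz2 : (c.rotate _ hw).getVert ((c.rotate _ hw).length - 1) ≠ Sum.inr (Sum.inr ()) := by
          intro h
          exact hz (mem_support_of_rotate hw (h ▸ getVert_mem_support' (by omega)))
        have he1 : (c.rotate _ hw).getVert (0 + 1) = Sum.inl w := by tauto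
        have he2 : (c.rotate _ hw).getVert ((c.rotate _ hw).length - 1) = Sum.inl w := by tauto
        have := getVert_injOn_cycle hcyc' (0 + 1) ((c.rotate _ hw).length - 1) (by omega)
          (by omega) (by omega) (by omega) (by rw [he1, he2])
        omega
      · -- every vertex on the cycle is of the form inl u
        push_neg at hp
        have hall : ∀ x ∈ c.support, ∃ u, x = Sum.inl u := by
          rintro (u | u | t) hx
          · exact ⟨u, rfl⟩
          · exact absurd hx (hp u)
          · cases t; exact absurd hx hz
        have hf : ∀ i, i ≤ c.length → ∃ u, c.getVert i = Sum.inl u :=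
          fun i hi => hall _ (getVert_mem_support' hi)
        have hcons : ∀ i, i < c.length →
            (∃ u ∈ C, c.getVert i = Sum.inl u) ∨ (∃ u ∈ C, c.getVert (i + 1) = Sum.inl u) := by
          intro i hi
          obtain ⟨a, ha⟩ := hf i (by omega)
          obtain ⟨b, hb⟩ := hf (i + 1) (by omega)
          have hadj := c.adj_getVert_succ hi
          rw [ha, hb] at hadj
          by_cases haC : a ∈ C
          · exact Or.inl ⟨a, haC, ha⟩
          · by_cases hbC : b ∈ C
            · exact Or.inr ⟨b, hbC, hb⟩
            · exact absurd hadj (hI a haC b hbC)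
        by_contra hnc
        push_neg at hnc
        have hpair : ∀ i, i + 2 ≤ c.length →
            ¬((∃ u ∈ C, c.getVert i = Sum.inl u) ∧ (∃ u ∈ C, c.getVert (i + 2) = Sum.inl u)) := by
          rintro i hi ⟨⟨a, haC, ha⟩, ⟨b, hbC, hb⟩⟩
          obtain ⟨hne, hnm⟩ := cycle_not_chord hc hl hi
          have hab : a ≠ b := fun h => hne (by rw [ha, hb, h])
          have hadj : (splitExt G).Adj (c.getVert i) (c.getVert (i + 2)) := by
            rw [ha, hb]; exact hC haC hbC hab
          exact hnm (hnc _ _ (getVert_mem_support' (by omega)) (getVert_mem_support' hi) hadj)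
        have h01 := hcons 0 (by omega)
        have h12 := hcons 1 (by omega)
        have h23 := hcons 2 (by omega)
        have h34 := hcons 3 (by omega)
        have n02 := hpair 0 (by omega)
        have n13 := hpair 1 (by omega)
        have n24 := hpair 2 (by omega)
        norm_num at h01 h12 h23 h34 n02 n13 n24
        tauto
  · -- diameter at most 2
    intro a b
    by_cases hab : a = b
    · subst hab
      simp [SimpleGraph.dist_self]
    · by_cases hadj : (splitExt G).Adj a b
      · have := SimpleGraph.dist_le (SimpleGraph.Walk.cons hadj SimpleGraph.Walk.nil)
        simp only [SimpleGraph.Walk.length_cons, SimpleGraph.Walk.length_nil] at this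
        omega
      · have ha : a ≠ Sum.inr (Sum.inr ()) := by
          rintro rfl
          exact hadj (splitExt_adj_z G b (fun h => hab h.symm))
        have hb : b ≠ Sum.inr (Sum.inr ()) := by
          rintro rfl
          exact hadj (splitExt_adj_z G a (fun h => hab h) : _).symm
        have := SimpleGraph.dist_le (SimpleGraph.Walk.cons (splitExt_adj_z G a ha).symm
            (SimpleGraph.Walk.cons (splitExt_adj_z G b hb) SimpleGraph.Walk.nil))
        simp only [SimpleGraph.Walk.length_cons, SimpleGraph.Walk.length_nil] at this
        omega
  · -- a pair at distance exactly 2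
    obtain ⟨u, v, huv⟩ := exists_pair_ne V
    refine ⟨Sum.inr (Sum.inl u), Sum.inr (Sum.inl v), ?_⟩
    have hne : (Sum.inr (Sum.inl u) : V ⊕ (V ⊕ Unit)) ≠ Sum.inr (Sum.inl v) := by
      simp [huv]
    have hnadj : ¬ (splitExt G).Adj (Sum.inr (Sum.inl u)) (Sum.inr (Sum.inl v)) :=
      fun h => h
    have hle : (splitExt G).dist (Sum.inr (Sum.inl u)) (Sum.inr (Sum.inl v)) ≤ 2 := by
      have := SimpleGraph.dist_le (SimpleGraph.Walk.cons
          (splitExt_adj_z G (Sum.inr (Sum.inl u)) (by simp)).symm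
          (SimpleGraph.Walk.cons (splitExt_adj_z G (Sum.inr (Sum.inl v)) (by simp))
            SimpleGraph.Walk.nil))
      simp only [SimpleGraph.Walk.length_cons, SimpleGraph.Walk.length_nil] at this
      omega
    have hwalk : (splitExt G).Walk (Sum.inr (Sum.inl u)) (Sum.inr (Sum.inl v)) :=
      SimpleGraph.Walk.cons (splitExt_adj_z G _ (by simp)).symm
        (SimpleGraph.Walk.cons (splitExt_adj_z G _ (by simp)) SimpleGraph.Walk.nil)
    have h0 : (splitExt G).dist (Sum.inr (Sum.inl u)) (Sum.inr (Sum.inl v)) ≠ 0 := by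
      rw [Ne, SimpleGraph.dist_eq_zero_iff_eq_or_not_reachable]
      push_neg
      exact ⟨hne, ⟨hwalk⟩⟩
    have h1 : (splitExt G).dist (Sum.inr (Sum.inl u)) (Sum.inr (Sum.inl v)) ≠ 1 :=
      fun h => hnadj ((SimpleGraph.dist_eq_one_iff_adj).mp h)
    omega
end

section
/- Let G be a connected bipartite graph with parts A and B, each of size at least 2, and let H be the co-bipartite graph obtained by making A ∪ Ā ∪ {a'} a clique and B ∪ B̄ ∪ {b'} a clique, where Ā = {a_i} and B̄ = {b_i} are copies of A and B with a_i adjacent only to vertices of the first clique, b_i only to the second, and a', b' universal vertices of H. If D is a dominating set of G, then D ∪ Ā ∪ B̄ is a strong geodetic set of H. -/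
open SimpleGraph

variable {V : Type*}

/-- Which clique side a vertex of the co-bipartite extension lies on
(true = the A side, false = the B side). -/
def cbSide (A : Set V) [DecidablePred (· ∈ A)] : V ⊕ (V ⊕ Bool) → Bool
  | Sum.inl v => decide (v ∈ A)
  | Sum.inr (Sum.inl v) => decide (v ∈ A)
  | Sum.inr (Sum.inr b) => !b

/-- The co-bipartite extension of a bipartite graph G with parts A and A-complement:
a clique copy of each part is added together with two universal vertices
a' = inr (inr false) and b' = inr (inr true); each of the two sides forms a clique. -/
def coBipExt (G : SimpleGraph V) (A : Set V) [DecidablePred (· ∈ A)] :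
    SimpleGraph (V ⊕ (V ⊕ Bool)) where
  Adj x y := x ≠ y ∧ (cbSide A x = cbSide A y ∨
    (∃ u v : V, x = Sum.inl u ∧ y = Sum.inl v ∧ G.Adj u v) ∨
    (∃ b, x = Sum.inr (Sum.inr b)) ∨ (∃ b, y = Sum.inr (Sum.inr b)))
  symm := by
    constructor
    rintro x y ⟨hne, h⟩
    refine ⟨hne.symm, ?_⟩
    rcases h with h | ⟨u, v, hx, hy, h⟩ | h | h
    · exact Or.inl h.symm
    · exact Or.inr (Or.inl ⟨v, u, hy, hx, h.symm⟩)
    · exact Or.inr (Or.inr (Or.inr h))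
    · exact Or.inr (Or.inr (Or.inl h))
  loopless := ⟨fun x h => h.1 rfl⟩

section AuxSGS

variable {W : Type*}

open Classical in
noncomputable def cbP0 (H : SimpleGraph W) (mid : W → W → W)
    (hmid : ∀ u v, u ≠ v → ¬ H.Adj u v → H.Adj u (mid u v) ∧ H.Adj (mid u v) v) :
    ∀ u v : W, H.Walk u v := fun u v =>
  if h : u = v then (Walk.nil : H.Walk u u).copy rfl h
  else if hadj : H.Adj u v then hadj.toWalk
  else Walk.cons (hmid u v h hadj).1 (Walk.cons (hmid u v h hadj).2 Walk.nil)

theorem cbP0_self (H : SimpleGraph W) (mid : W → W → W) (hmid) (u : W) :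
    cbP0 H mid hmid u u = Walk.nil := by
  simp [cbP0]

theorem cbP0_of_adj (H : SimpleGraph W) (mid : W → W → W) (hmid) {u v : W}
    (hadj : H.Adj u v) : cbP0 H mid hmid u v = hadj.toWalk := by
  rw [cbP0, dif_neg hadj.ne, dif_pos hadj]

theorem cbP0_support_of_not_adj (H : SimpleGraph W) (mid : W → W → W) (hmid) {u v : W}
    (h : u ≠ v) (hadj : ¬ H.Adj u v) :
    (cbP0 H mid hmid u v).support = [u, mid u v, v] := by
  rw [cbP0, dif_neg h, dif_neg hadj]
  simp

theorem cbP0_length_of_not_adj (H : SimpleGraph W) (mid : W → W → W) (hmid) {u v : W}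
    (h : u ≠ v) (hadj : ¬ H.Adj u v) :
    (cbP0 H mid hmid u v).length = 2 := by
  rw [cbP0, dif_neg h, dif_neg hadj]
  simp

noncomputable def cbP (H : SimpleGraph W) (f : W → ℕ) (P0 : ∀ u v : W, H.Walk u v) :
    ∀ u v : W, H.Walk u v := fun u v =>
  if f u ≤ f v then P0 u v else (P0 v u).reverse

theorem cbP_rev (H : SimpleGraph W) (f : W → ℕ) (hf : Function.Injective f)
    (P0 : ∀ u v : W, H.Walk u v) (h0 : ∀ u, P0 u u = Walk.nil) (u v : W) :
    cbP H f P0 v u = (cbP H f P0 u v).reverse := by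
  by_cases h : u = v
  · subst h
    simp [cbP, h0]
  · rcases lt_trichotomy (f u) (f v) with hlt | heq | hgt
    · rw [cbP, cbP, if_pos hlt.le, if_neg (not_le.2 hlt)]
    · exact absurd (hf heq) h
    · rw [cbP, cbP, if_pos hgt.le, if_neg (not_le.2 hgt), Walk.reverse_reverse]

theorem cbP_length (H : SimpleGraph W) (f : W → ℕ) (P0 : ∀ u v : W, H.Walk u v)
    (hlen : ∀ u v, (P0 u v).length = H.dist u v) (u v : W) :
    (cbP H f P0 u v).length = H.dist u v := by
  rw [cbP]
  split
  · exact hlen u v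
  · rw [Walk.length_reverse, hlen, dist_comm]

theorem cbP_support_mem (H : SimpleGraph W) (f : W → ℕ) (P0 : ∀ u v : W, H.Walk u v)
    {u v w : W} (h1 : w ∈ (P0 u v).support) (h2 : w ∈ (P0 v u).support) :
    w ∈ (cbP H f P0 u v).support := by
  rw [cbP]
  split
  · exact h1
  · rw [Walk.support_reverse, List.mem_reverse]
    exact h2

end AuxSGS

open Classical in
noncomputable def cbMid (G : SimpleGraph V) (a1 : V) :
    V ⊕ (V ⊕ Bool) → V ⊕ (V ⊕ Bool) → V ⊕ (V ⊕ Bool)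
  | Sum.inl d, Sum.inr (Sum.inl w) =>
      if G.Adj d w then Sum.inl w else Sum.inr (Sum.inr false)
  | Sum.inr (Sum.inl w), Sum.inl d =>
      if G.Adj d w then Sum.inl w else Sum.inr (Sum.inr false)
  | Sum.inr (Sum.inl x), Sum.inr (Sum.inl y) =>
      if x = a1 ∨ y = a1 then Sum.inr (Sum.inr false) else Sum.inr (Sum.inr true)
  | _, _ => Sum.inr (Sum.inr false)

/-- If D is a dominating set of the connected bipartite graph G (parts A, A-complement,
each of size at least 2), then D together with all clique-copy vertices is a strong
geodetic set of the co-bipartite extension H. -/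
theorem coBipExt_strongGeodeticSet_of_dominating [Fintype V] (G : SimpleGraph V)
    (hG : G.Connected) (A : Set V) [DecidablePred (· ∈ A)]
    (hbip : ∀ u v : V, G.Adj u v → (u ∈ A ↔ v ∉ A))
    (hA : 2 ≤ A.ncard) (hB : 2 ≤ Aᶜ.ncard)
    (D : Set V) (hD : IsDominatingSet G D) :
    IsStrongGeodeticSet (coBipExt G A)
      (Sum.inl '' D ∪ {x : V ⊕ (V ⊕ Bool) | ∃ v : V, x = Sum.inr (Sum.inl v)}) := by
  classical
  set H := coBipExt G A with hHdef
  obtain ⟨a1, ha1, a2, ha2, ha12⟩ : ∃ a ∈ A, ∃ b ∈ A, a ≠ b :=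
    (Set.one_lt_ncard (Set.toFinite A)).1 (by omega)
  obtain ⟨b1, hb1⟩ : Aᶜ.Nonempty := Set.nonempty_of_ncard_ne_zero (by omega)
  -- universal adjacency of the two extra vertices
  have hUa : ∀ (b : Bool) (x : V ⊕ (V ⊕ Bool)), x ≠ Sum.inr (Sum.inr b) →
      H.Adj (Sum.inr (Sum.inr b)) x :=
    fun b x hx => by rw [hHdef]; exact ⟨fun h => hx h.symm, Or.inr (Or.inr (Or.inl ⟨b, rfl⟩))⟩
  have hUa' : ∀ (b : Bool) (x : V ⊕ (V ⊕ Bool)), x ≠ Sum.inr (Sum.inr b) →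
      H.Adj x (Sum.inr (Sum.inr b)) :=
    fun b x hx => by rw [hHdef]; exact ⟨hx, Or.inr (Or.inr (Or.inr ⟨b, rfl⟩))⟩
  -- the midpoint function is a common neighbour for non-adjacent pairs
  have hmid : ∀ u v : V ⊕ (V ⊕ Bool), u ≠ v → ¬ H.Adj u v →
      H.Adj u (cbMid G a1 u v) ∧ H.Adj (cbMid G a1 u v) v := by
    rintro (d | w | b) (e | w' | b') hne hadj
    · simp only [cbMid]
      exact ⟨hUa' false _ (by simp), hUa false _ (by simp)⟩
    · by_cases hdw : G.Adj d w'
      · have hdnw : d ≠ w' := by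
          rintro rfl
          exact absurd (hbip d d hdw) (by tauto)
        simp only [cbMid, if_pos hdw]
        rw [hHdef]
        refine ⟨⟨by simpa using hdnw, Or.inr (Or.inl ⟨d, w', rfl, rfl, hdw⟩)⟩,
          ⟨by simp, Or.inl ?_⟩⟩
        simp [cbSide]
      · simp only [cbMid, if_neg hdw]
        exact ⟨hUa' false _ (by simp), hUa false _ (by simp)⟩
    · exact absurd (hUa' b' _ (by simpa using hne)) hadj
    · by_cases hdw : G.Adj e w
      · have hdnw : e ≠ w := by
          rintro rfl
          exact absurd (hbip e e hdw) (by tauto)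
        simp only [cbMid, if_pos hdw]
        rw [hHdef]
        refine ⟨⟨by simp, Or.inl ?_⟩,
          ⟨by simpa using hdnw.symm, Or.inr (Or.inl ⟨w, e, rfl, rfl, hdw.symm⟩)⟩⟩
        simp [cbSide]
      · simp only [cbMid, if_neg hdw]
        exact ⟨hUa' false _ (by simp), hUa false _ (by simp)⟩
    · simp only [cbMid]
      split
      · exact ⟨hUa' false _ (by simp), hUa false _ (by simp)⟩
      · exact ⟨hUa' true _ (by simp), hUa true _ (by simp)⟩
    · exact absurd (hUa' b' _ (by simpa using hne)) hadj
    · exact absurd (hUa b _ (Ne.symm hne)) hadj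
    · exact absurd (hUa b _ (Ne.symm hne)) hadj
    · exact absurd (hUa b _ (Ne.symm hne)) hadj
  set P0 : ∀ u v : V ⊕ (V ⊕ Bool), H.Walk u v := cbP0 H (cbMid G a1) hmid with hP0def
  set f : V ⊕ (V ⊕ Bool) → ℕ := fun x => (Fintype.equivFin (V ⊕ (V ⊕ Bool)) x : ℕ)
    with hfdef
  have hf : Function.Injective f := fun a b h =>
    (Fintype.equivFin (V ⊕ (V ⊕ Bool))).injective (Fin.val_injective h)
  -- the length of P0 u v is the distance
  have hlen0 : ∀ u v, (P0 u v).length = H.dist u v := by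
    intro u v
    by_cases h : u = v
    · subst h
      rw [hP0def, cbP0_self]
      simp [SimpleGraph.dist_self]
    · by_cases hadj : H.Adj u v
      · rw [hP0def, cbP0_of_adj _ _ _ hadj]
        rw [SimpleGraph.dist_eq_one_iff_adj.2 hadj]
        simp [Adj.toWalk]
      · have hle : H.dist u v ≤ 2 := by
          have h2 := SimpleGraph.dist_le (P0 u v)
          rwa [hP0def, cbP0_length_of_not_adj _ _ _ h hadj] at h2
        have hne0 : H.dist u v ≠ 0 := by
          rw [SimpleGraph.dist_ne_zero_iff_ne_and_reachable]
          exact ⟨h, (P0 u v).reachable⟩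
        have hne1 : H.dist u v ≠ 1 := fun h1 => hadj (SimpleGraph.dist_eq_one_iff_adj.1 h1)
        rw [hP0def, cbP0_length_of_not_adj _ _ _ h hadj]
        omega
  -- non-adjacency criteria
  have hnadj1 : ∀ d w : V, (d ∈ A ↔ w ∉ A) → ¬ H.Adj (Sum.inl d) (Sum.inr (Sum.inl w)) := by
    intro d w hside
    rw [hHdef]
    rintro ⟨hne, h | ⟨u', v', h1, h2, h3⟩ | ⟨b, hb⟩ | ⟨b, hb⟩⟩
    · simp only [cbSide, decide_eq_decide] at h
      tauto
    · exact absurd h2 (by simp)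
    · simp at hb
    · simp at hb
  have hnadj2 : ∀ x y : V, x ∈ A → y ∉ A → ¬ H.Adj (Sum.inr (Sum.inl x)) (Sum.inr (Sum.inl y)) := by
    intro x y hx hy
    rw [hHdef]
    rintro ⟨hne, h | ⟨u', v', h1, h2, h3⟩ | ⟨b, hb⟩ | ⟨b, hb⟩⟩
    · simp only [cbSide, decide_eq_decide] at h
      tauto
    · exact absurd h1 (by simp)
    · simp at hb
    · simp at hb
  refine ⟨cbP H f P0, fun u v => cbP_length H f P0 hlen0 u v,
    fun u v => cbP_rev H f hf P0 (fun u => by rw [hP0def, cbP0_self]) u v, ?_⟩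
  rintro (w | w | b)
  · -- a vertex of G : dominated
    rcases hD w with hw | ⟨d, hdD, hdw⟩
    · exact Or.inl (Set.mem_union_left _ ⟨w, hw, rfl⟩)
    · refine Or.inr ⟨Sum.inl d, Set.mem_union_left _ ⟨d, hdD, rfl⟩,
        Sum.inr (Sum.inl w), Set.mem_union_right _ ⟨w, rfl⟩, by simp, ?_⟩
      have hside := hbip d w hdw
      have hna : ¬ H.Adj (Sum.inl d) (Sum.inr (Sum.inl w)) := hnadj1 d w hside
      have hna' : ¬ H.Adj (Sum.inr (Sum.inl w)) (Sum.inl d) := fun h => hna h.symm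
      apply cbP_support_mem
      · rw [hP0def, cbP0_support_of_not_adj _ _ _ (by simp) hna]
        simp [cbMid, hdw]
      · rw [hP0def, cbP0_support_of_not_adj _ _ _ (by simp) hna']
        simp [cbMid, hdw]
  · exact Or.inl (Set.mem_union_right _ ⟨w, rfl⟩)
  · -- the two universal vertices
    cases b
    · refine Or.inr ⟨Sum.inr (Sum.inl a1), Set.mem_union_right _ ⟨a1, rfl⟩,
        Sum.inr (Sum.inl b1), Set.mem_union_right _ ⟨b1, rfl⟩, ?_, ?_⟩
      · simp only [ne_eq, Sum.inr.injEq, Sum.inl.injEq]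
        rintro rfl
        exact hb1 ha1
      · have hna : ¬ H.Adj (Sum.inr (Sum.inl a1)) (Sum.inr (Sum.inl b1)) := hnadj2 a1 b1 ha1 hb1
        have hna' : ¬ H.Adj (Sum.inr (Sum.inl b1)) (Sum.inr (Sum.inl a1)) := fun h => hna h.symm
        have hne : (Sum.inr (Sum.inl a1) : V ⊕ (V ⊕ Bool)) ≠ Sum.inr (Sum.inl b1) := by
          simp only [ne_eq, Sum.inr.injEq, Sum.inl.injEq]
          rintro rfl
          exact hb1 ha1
        apply cbP_support_mem
        · rw [hP0def, cbP0_support_of_not_adj _ _ _ hne hna]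
          simp [cbMid]
        · rw [hP0def, cbP0_support_of_not_adj _ _ _ hne.symm hna']
          simp [cbMid]
    · have hb1a1 : b1 ≠ a1 := fun h => hb1 (h ▸ ha1)
      have ha2a1 : a2 ≠ a1 := ha12.symm
      have hb1a2 : b1 ∉ A := hb1
      refine Or.inr ⟨Sum.inr (Sum.inl a2), Set.mem_union_right _ ⟨a2, rfl⟩,
        Sum.inr (Sum.inl b1), Set.mem_union_right _ ⟨b1, rfl⟩, ?_, ?_⟩
      · simp only [ne_eq, Sum.inr.injEq, Sum.inl.injEq]
        rintro rfl
        exact hb1 ha2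
      · have hna : ¬ H.Adj (Sum.inr (Sum.inl a2)) (Sum.inr (Sum.inl b1)) := hnadj2 a2 b1 ha2 hb1
        have hna' : ¬ H.Adj (Sum.inr (Sum.inl b1)) (Sum.inr (Sum.inl a2)) := fun h => hna h.symm
        have hne : (Sum.inr (Sum.inl a2) : V ⊕ (V ⊕ Bool)) ≠ Sum.inr (Sum.inl b1) := by
          simp only [ne_eq, Sum.inr.injEq, Sum.inl.injEq]
          rintro rfl
          exact hb1 ha2
        apply cbP_support_mem
        · rw [hP0def, cbP0_support_of_not_adj _ _ _ hne hna]
          simp [cbMid, ha2a1, hb1a1]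
        · rw [hP0def, cbP0_support_of_not_adj _ _ _ hne.symm hna']
          simp [cbMid, ha2a1, hb1a1]
end

section
/- In the co-bipartite graph H constructed from a connected bipartite graph G (as above), every strong geodetic set of H contains all of Ā ∪ B̄, and if S is a strong geodetic set of H with |S| ≤ k + |Ā| + |B̄|, then S ∩ V(G) is a dominating set of G of size at most k. -/
open SimpleGraph

variable {V : Type*}

/-- An internal vertex of a geodesic in a graph of diameter 2 (guaranteed by a
universal vertex) is the midpoint: it is adjacent to both endpoints, which are
non-adjacent. -/
lemma mid_of_geodesic {W : Type*} {H : SimpleGraph W} (a : W) (ha : ∀ x, x ≠ a → H.Adj a x)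
    {u v w : W} (p : H.Walk u v) (hl : p.length = H.dist u v)
    (hw : w ∈ p.support) (hwu : w ≠ u) (hwv : w ≠ v) :
    H.Adj u w ∧ H.Adj w v ∧ ¬ H.Adj u v := by
  have hd2 : H.dist u v ≤ 2 := by
    by_cases huv : u = v
    · subst huv; simp [SimpleGraph.dist_self]
    by_cases hadj : H.Adj u v
    · have : H.dist u v = 1 := SimpleGraph.dist_eq_one_iff_adj.mpr hadj
      omega
    have hu : u ≠ a := by
      rintro rfl
      exact hadj (ha v (fun e => huv e.symm))
    have hv : v ≠ a := by
      rintro rfl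
      exact hadj ((ha u hu).symm)
    have := H.dist_le ((ha u hu).symm.toWalk.append (ha v hv).toWalk)
    simpa using this
  cases p with
  | nil => simp at hw; exact absurd hw hwu
  | cons h q =>
    cases q with
    | nil => simp at hw; rcases hw with h1 | h1 <;> [exact absurd h1 hwu; exact absurd h1 hwv]
    | @cons b c _ h' r =>
      have hr : r.length = 0 := by
        simp [SimpleGraph.Walk.length_cons] at hl
        omega
      cases r with
      | nil =>
        simp at hw
        rcases hw with h1 | h1 | h1
        · exact absurd h1 hwu
        · subst h1
          refine ⟨h, h', fun hadj => ?_⟩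
          have h1 : H.dist u v = 1 := SimpleGraph.dist_eq_one_iff_adj.mpr hadj
          simp [h1] at hl
        · exact absurd h1 hwv
      | cons h'' r' => simp at hr

section Aux

variable (G : SimpleGraph V) (A : Set V) [DecidablePred (· ∈ A)]

lemma coBipExt_adj_universal (b : Bool) (x : V ⊕ (V ⊕ Bool))
    (h : Sum.inr (Sum.inr b) ≠ x) : (coBipExt G A).Adj (Sum.inr (Sum.inr b)) x :=
  ⟨h, Or.inr (Or.inr (Or.inl ⟨b, rfl⟩))⟩

lemma coBipExt_adj_of_side {x y : V ⊕ (V ⊕ Bool)} (h : x ≠ y)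
    (hs : cbSide A x = cbSide A y) : (coBipExt G A).Adj x y :=
  ⟨h, Or.inl hs⟩

/-- Any two distinct neighbours of a clique-copy vertex are adjacent. -/
lemma coBipExt_copy_simplicial {v : V} {u w : V ⊕ (V ⊕ Bool)}
    (hux : (coBipExt G A).Adj u (Sum.inr (Sum.inl v)))
    (hxw : (coBipExt G A).Adj (Sum.inr (Sum.inl v)) w)
    (hne : u ≠ w) : (coBipExt G A).Adj u w := by
  obtain ⟨-, hu⟩ := hux
  obtain ⟨-, hw⟩ := hxw
  rcases hu with hu | ⟨u', v', _, hx, _⟩ | ⟨b, rfl⟩ | ⟨b, hx⟩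
  · rcases hw with hw | ⟨u', v', hx, _, _⟩ | ⟨b, hx⟩ | ⟨b, rfl⟩
    · exact coBipExt_adj_of_side G A hne (hu.trans hw)
    · exact absurd hx (by simp)
    · exact absurd hx (by simp)
    · exact (coBipExt_adj_universal G A b u (Ne.symm hne)).symm
  · exact absurd hx (by simp)
  · exact coBipExt_adj_universal G A b w hne
  · exact absurd hx (by simp)

end Aux

/-- In the co-bipartite extension H of a connected bipartite graph G, every strong
geodetic set contains all clique-copy vertices, and a strong geodetic set of size at
most k + |V(G)| yields a dominating set of G of size at most k. -/
theorem coBipExt_dominating_of_strongGeodeticSet [Fintype V] (G : SimpleGraph V)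
    (hG : G.Connected) (A : Set V) [DecidablePred (· ∈ A)]
    (hbip : ∀ u v : V, G.Adj u v → (u ∈ A ↔ v ∉ A))
    (hA : 2 ≤ A.ncard) (hB : 2 ≤ Aᶜ.ncard) :
    (∀ S : Set (V ⊕ (V ⊕ Bool)), IsStrongGeodeticSet (coBipExt G A) S →
      {x : V ⊕ (V ⊕ Bool) | ∃ v : V, x = Sum.inr (Sum.inl v)} ⊆ S) ∧
    ∀ (S : Set (V ⊕ (V ⊕ Bool))) (k : ℕ), IsStrongGeodeticSet (coBipExt G A) S →
      S.ncard ≤ k + Fintype.card V →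
      IsDominatingSet G {v : V | Sum.inl v ∈ S} ∧
        ({v : V | Sum.inl v ∈ S}).ncard ≤ k := by
  set H := coBipExt G A with hH
  have ha : ∀ x, x ≠ Sum.inr (Sum.inr false) → H.Adj (Sum.inr (Sum.inr false)) x :=
    fun x hx => coBipExt_adj_universal G A false x (Ne.symm hx)
  -- Part 1
  have part1 : ∀ S : Set (V ⊕ (V ⊕ Bool)), IsStrongGeodeticSet H S →
      {x : V ⊕ (V ⊕ Bool) | ∃ v : V, x = Sum.inr (Sum.inl v)} ⊆ S := by
    rintro S ⟨P, hlen, -, hcov⟩ x ⟨v, rfl⟩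
    rcases hcov (Sum.inr (Sum.inl v)) with h | ⟨u, hu, w, hw, huw, hmem⟩
    · exact h
    by_contra hxS
    have hxu : Sum.inr (Sum.inl v) ≠ u := fun e => hxS (e ▸ hu)
    have hxw : Sum.inr (Sum.inl v) ≠ w := fun e => hxS (e ▸ hw)
    obtain ⟨h1, h2, h3⟩ := mid_of_geodesic _ ha (P u w) (hlen u w) hmem hxu hxw
    exact h3 (coBipExt_copy_simplicial G A h1 h2 huw)
  refine ⟨part1, ?_⟩
  rintro S k hS hcard
  have hSC := part1 S hS
  obtain ⟨P, hlen, -, hcov⟩ := hS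
  constructor
  · -- domination
    intro v
    by_cases hvS : Sum.inl v ∈ S
    · exact Or.inl hvS
    rcases hcov (Sum.inl v) with h | ⟨u, hu, w, hw, huw, hmem⟩
    · exact absurd h hvS
    have hxu : (Sum.inl v : V ⊕ (V ⊕ Bool)) ≠ u := fun e => hvS (e ▸ hu)
    have hxw : (Sum.inl v : V ⊕ (V ⊕ Bool)) ≠ w := fun e => hvS (e ▸ hw)
    obtain ⟨h1, h2, h3⟩ := mid_of_geodesic _ ha (P u w) (hlen u w) hmem hxu hxw
    right
    obtain ⟨-, hu'⟩ := h1
    obtain ⟨-, hw'⟩ := h2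
    rcases hu' with hsu | ⟨u', v', rfl, hv', hadj⟩ | ⟨b, rfl⟩ | ⟨b, hb⟩
    · -- u has the same side as inl v; then w must give a G-edge
      rcases hw' with hsw | ⟨u', v', hv', rfl, hadj⟩ | ⟨b, hb⟩ | ⟨b, rfl⟩
      · exact absurd (coBipExt_adj_of_side G A huw (hsu.trans hsw)) h3
      · obtain rfl : v = u' := by simpa using hv'
        exact ⟨v', hw, hadj.symm⟩
      · exact absurd hb (by simp)
      · exact absurd (coBipExt_adj_universal G A b u (Ne.symm huw)).symm h3
    · obtain rfl : v = v' := by simpa using hv'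
      exact ⟨u', hu, hadj⟩
    · exact absurd (coBipExt_adj_universal G A b w huw) h3
    · exact absurd hb (by simp)
  · -- cardinality
    set D : Set V := {v : V | Sum.inl v ∈ S}
    set C : Set (V ⊕ (V ⊕ Bool)) := {x | ∃ v : V, x = Sum.inr (Sum.inl v)}
    set D' : Set (V ⊕ (V ⊕ Bool)) := Sum.inl '' D
    have hCcard : C.ncard = Fintype.card V := by
      have : C = (fun v : V => (Sum.inr (Sum.inl v) : V ⊕ (V ⊕ Bool))) '' Set.univ := by
        ext x; simp [C, eq_comm]
      rw [this, Set.ncard_image_of_injective _ (fun a b h => by simpa using h),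
        Set.ncard_univ, Nat.card_eq_fintype_card]
    have hD'card : D'.ncard = D.ncard :=
      Set.ncard_image_of_injective _ Sum.inl_injective
    have hdisj : Disjoint D' C := by
      rw [Set.disjoint_left]
      rintro x ⟨v, -, rfl⟩ ⟨w, hw⟩
      simp at hw
    have hsub : D' ∪ C ⊆ S := by
      rintro x (⟨v, hv, rfl⟩ | hx)
      · exact hv
      · exact hSC hx
    have h1 : (D' ∪ C).ncard ≤ S.ncard := Set.ncard_le_ncard hsub (Set.toFinite S)
    rw [Set.ncard_union_eq hdisj (Set.toFinite D') (Set.toFinite C), hCcard, hD'card] at h1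
    omega
end
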